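/- Consider the BPP description with variables {X, Y, Z, A}, actions {τ, a, b} and rules X →τ Y, X →b Z, Y →b ε, Y →τ YA, Z →τ ε, Z →τ ZA, A →τ ε, A →a ε. Then X ≈_ω Y (the singleton processes X and Y are related by the short-long approximant at level ω) but X ≉ Y (they are not weakly bisimilar); consequently for this description ≈ ≠ ≈_ω. -/

import Mathlib

/-- A Basic Parallel Processes description: finitely many variables, finitely many
actions (with a distinguished silent action `tau`) and finitely many rules. -/
structure BPP where
  V : Type
  Act : Type
  finV : Finite V
  finAct : Finite Act
  tau : Act
  T : Set (V × Act × Multiset V)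
  finT : T.Finite

namespace BPP

variable (B : BPP)

/-- Processes are multisets of variables. -/
abbrev Proc (B : BPP) : Type := Multiset B.V

/-- The strong step relation `α →a β`. -/
def Step (a : B.Act) (α β : B.Proc) : Prop :=
  ∃ X γ δ, (X, a, γ) ∈ B.T ∧ α = X ::ₘ δ ∧ β = γ + δ

/-- `α ⇒τ β`: the reflexive–transitive closure of silent steps. -/
def WTau : B.Proc → B.Proc → Prop :=
  Relation.ReflTransGen (B.Step B.tau)

/-- The weak step relation `α ⇒a β`. -/
def WStep (a : B.Act) (α β : B.Proc) : Prop :=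
  (a = B.tau ∧ B.WTau α β) ∨
  (a ≠ B.tau ∧ ∃ γ δ, B.WTau α γ ∧ B.Step a γ δ ∧ B.WTau δ β)

/-- Weak steps along a word `w ∈ Act*`. -/
def WWord : List B.Act → B.Proc → B.Proc → Prop
  | [] => B.WTau
  | a :: w => fun α β => ∃ γ, B.WStep a α γ ∧ WWord w γ β

/-- A weak bisimulation. -/
def IsWeakBisim (R : B.Proc → B.Proc → Prop) : Prop :=
  Symmetric R ∧
    ∀ α β, R α β → ∀ a α', B.Step a α α' → ∃ β', B.WStep a β β' ∧ R α' β'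

/-- Weak bisimilarity `α ≈ β`. -/
def WBisim (α β : B.Proc) : Prop :=
  ∃ R, B.IsWeakBisim R ∧ R α β

/-- Refinement function for the short-long approximants: `Ψ(R)` is the largest
symmetric relation such that every strong attack is answered by a weak step into `R`. -/
def RefSL (R : B.Proc → B.Proc → Prop) (α β : B.Proc) : Prop :=
  (∀ a α', B.Step a α α' → ∃ β', B.WStep a β β' ∧ R α' β') ∧
  (∀ a β', B.Step a β β' → ∃ α', B.WStep a α α' ∧ R α' β')

/-- Refinement function for the long-long approximants: weak attacks, weak responses. -/
def RefLL (R : B.Proc → B.Proc → Prop) (α β : B.Proc) : Prop :=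
  (∀ a α', B.WStep a α α' → ∃ β', B.WStep a β β' ∧ R α' β') ∧
  (∀ a β', B.WStep a β β' → ∃ α', B.WStep a α α' ∧ R α' β')

/-- Refinement function for the word approximants: attacks along words, responses
along the same word. -/
def RefW (R : B.Proc → B.Proc → Prop) (α β : B.Proc) : Prop :=
  (∀ w α', B.WWord w α α' → ∃ β', B.WWord w β β' ∧ R α' β') ∧
  (∀ w β', B.WWord w β β' → ∃ α', B.WWord w α α' ∧ R α' β')

/-- Refinement function for the Parikh approximants: attacks along words, responses
along any word with the same Parikh image (multiset of letters). -/
def RefP (R : B.Proc → B.Proc → Prop) (α β : B.Proc) : Prop :=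
  (∀ w α', B.WWord w α α' →
    ∃ (w' : List B.Act) (β' : B.Proc), (↑w' : Multiset B.Act) = ↑w ∧ B.WWord w' β β' ∧ R α' β') ∧
  (∀ w β', B.WWord w β β' →
    ∃ (w' : List B.Act) (α' : B.Proc), (↑w' : Multiset B.Act) = ↑w ∧ B.WWord w' α α' ∧ R α' β')

/-- Approximants by transfinite recursion: `≈₀` is the full relation,
`≈_{i+1} = Ψ(≈_i)` and `≈_λ = ⋂_{i<λ} ≈_i` at limit ordinals. -/
noncomputable def Approx (F : (B.Proc → B.Proc → Prop) → (B.Proc → B.Proc → Prop))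
    (o : Ordinal) : B.Proc → B.Proc → Prop :=
  Ordinal.limitRecOn o (fun _ _ => True) (fun _ R => F R)
    (fun _ _ ih α β => ∀ i hi, ih i hi α β)

/-- A deadlock: no visible step is possible. -/
def Deadlock (α : B.Proc) : Prop :=
  ∀ a α', B.Step a α α' → a = B.tau

/-- The norm of a process: least length of a word leading weakly to a deadlock
(`⊤ = ∞` if there is none). -/
noncomputable def norm (α : B.Proc) : ℕ∞ :=
  sInf {n : ℕ∞ | ∃ w δ, B.WWord w α δ ∧ B.Deadlock δ ∧ (w.length : ℕ∞) = n}

/-- A normed description: every variable has finite norm. -/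
def Normed : Prop := ∀ X : B.V, B.norm {X} ≠ ⊤

/-- Silent norm-preserving steps `α →₀ β`. -/
def Step0 (α β : B.Proc) : Prop :=
  B.Step B.tau α β ∧ B.norm α = B.norm β

/-- `⇒₀`: reflexive–transitive closure of silent norm-preserving steps. -/
def WTau0 : B.Proc → B.Proc → Prop :=
  Relation.ReflTransGen B.Step0

/-- No two distinct variables are redundant. -/
def NoRedundantVars : Prop :=
  ∀ X Y : B.V, X ≠ Y → ¬ (B.WTau0 {X} {Y} ∧ B.WTau0 {Y} {X})

/-- A generator: a variable that can silently, norm-preservingly reproduce itself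
together with some nonempty rest. -/
def IsGenerator (X : B.V) : Prop :=
  ∃ α : B.Proc, α ≠ 0 ∧ B.WTau0 {X} ({X} + α)

/-- A pure variable cannot vanish along `⇒₀`. -/
def IsPure (X : B.V) : Prop :=
  ∀ α : B.Proc, B.WTau0 {X} α → X ∈ α

end BPP


inductive V15 : Type
  | X | Y | Z | A
deriving DecidableEq

instance : Fintype V15 :=
  ⟨{V15.X, V15.Y, V15.Z, V15.A}, fun x => by cases x <;> simp⟩

inductive A15 : Type
  | tau | a | b
deriving DecidableEq

instance : Fintype A15 :=
  ⟨{A15.tau, A15.a, A15.b}, fun x => by cases x <;> simp⟩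

/-- Rules: X →τ Y, X →b Z, Y →b ε, Y →τ YA, Z →τ ε, Z →τ ZA, A →τ ε, A →a ε. -/
def rules15 : List (V15 × A15 × Multiset V15) :=
  [(V15.X, A15.tau, {V15.Y}), (V15.X, A15.b, {V15.Z}),
   (V15.Y, A15.b, 0), (V15.Y, A15.tau, {V15.Y, V15.A}),
   (V15.Z, A15.tau, 0), (V15.Z, A15.tau, {V15.Z, V15.A}),
   (V15.A, A15.tau, 0), (V15.A, A15.a, 0)]

def B15 : BPP :=
  { V := V15, Act := A15, finV := inferInstance, finAct := inferInstance,
    tau := A15.tau, T := {r | r ∈ rules15}, finT := rules15.finite_toSet }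


namespace SL15

open BPP

universe u

/-- `A^n`. -/
def An (n : ℕ) : Multiset V15 := Multiset.replicate n V15.A

/-- `Y A^n`. -/
def Yn (n : ℕ) : Multiset V15 := V15.Y ::ₘ An n

/-- `Z A^n`. -/
def Zn (n : ℕ) : Multiset V15 := V15.Z ::ₘ An n

lemma An_succ (n : ℕ) : An (n + 1) = V15.A ::ₘ An n := Multiset.replicate_succ _ _

lemma An_zero : An 0 = 0 := rfl

lemma Yn_zero : Yn 0 = ({V15.Y} : Multiset V15) := rfl

lemma Zn_zero : Zn 0 = ({V15.Z} : Multiset V15) := rfl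

lemma consEq_An {W : V15} {δ : Multiset V15} {n : ℕ} (h : An n = W ::ₘ δ) :
    W = V15.A ∧ ∃ m, n = m + 1 ∧ δ = An m := by
  have hW : W ∈ An n := h ▸ Multiset.mem_cons_self _ _
  rw [An, Multiset.mem_replicate] at hW
  obtain ⟨hn, rfl⟩ := hW
  obtain ⟨m, rfl⟩ := Nat.exists_eq_succ_of_ne_zero hn
  refine ⟨rfl, m, rfl, ?_⟩
  rw [An_succ] at h
  exact ((Multiset.cons_inj_right _).mp h).symm

lemma consEq_cons {W v : V15} {δ : Multiset V15} {n : ℕ} (h : v ::ₘ An n = W ::ₘ δ) :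
    (W = v ∧ δ = An n) ∨ (W = V15.A ∧ ∃ m, n = m + 1 ∧ δ = v ::ₘ An m) := by
  have hW : W ∈ (v ::ₘ An n : Multiset V15) := h ▸ Multiset.mem_cons_self _ _
  rw [Multiset.mem_cons] at hW
  rcases hW with rfl | hW
  · exact Or.inl ⟨rfl, ((Multiset.cons_inj_right _).mp h).symm⟩
  · rw [An, Multiset.mem_replicate] at hW
    obtain ⟨hn, rfl⟩ := hW
    obtain ⟨m, rfl⟩ := Nat.exists_eq_succ_of_ne_zero hn
    refine Or.inr ⟨rfl, m, rfl, ?_⟩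
    rw [An_succ, Multiset.cons_swap] at h
    exact ((Multiset.cons_inj_right _).mp h).symm

lemma consEq_singleton {W v : V15} {δ : Multiset V15} (h : ({v} : Multiset V15) = W ::ₘ δ) :
    W = v ∧ δ = 0 := by
  have h' : v ::ₘ An 0 = W ::ₘ δ := h
  rcases consEq_cons h' with ⟨rfl, h2⟩ | ⟨_, m, hm, _⟩
  · exact ⟨rfl, h2⟩
  · omega

/-- Constructing a step from a rule. -/
lemma mkStep {v : V15} {act : A15} {γ : Multiset V15} (hm : (v, act, γ) ∈ rules15)
    (δ : Multiset V15) : B15.Step act (v ::ₘ δ) (γ + δ) :=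
  ⟨v, γ, δ, hm, rfl, rfl⟩

lemma stepXY : B15.Step A15.tau ({V15.X} : Multiset V15) ({V15.Y} : Multiset V15) := by
  have := mkStep (v := V15.X) (act := A15.tau) (γ := {V15.Y}) (by simp [rules15]) 0
  exact this

lemma stepXZ : B15.Step A15.b ({V15.X} : Multiset V15) ({V15.Z} : Multiset V15) := by
  have := mkStep (v := V15.X) (act := A15.b) (γ := {V15.Z}) (by simp [rules15]) 0
  exact this

lemma stepYb (n : ℕ) : B15.Step A15.b (Yn n) (An n) := by
  have := mkStep (v := V15.Y) (act := A15.b) (γ := 0) (by simp [rules15]) (An n)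
  exact this

lemma stepYτ (n : ℕ) : B15.Step A15.tau (Yn n) (Yn (n + 1)) := by
  have := mkStep (v := V15.Y) (act := A15.tau) (γ := {V15.Y, V15.A}) (by simp [rules15]) (An n)
  have e : ({V15.Y, V15.A} : Multiset V15) + An n = Yn (n + 1) := by
    show (V15.Y ::ₘ V15.A ::ₘ 0) + An n = V15.Y ::ₘ An (n + 1)
    simp [An_succ, Multiset.cons_add]
  rw [e] at this
  exact this

lemma stepZ0 (n : ℕ) : B15.Step A15.tau (Zn n) (An n) := by
  have := mkStep (v := V15.Z) (act := A15.tau) (γ := 0) (by simp [rules15]) (An n)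
  exact this

lemma stepZA (n : ℕ) : B15.Step A15.tau (Zn n) (Zn (n + 1)) := by
  have := mkStep (v := V15.Z) (act := A15.tau) (γ := {V15.Z, V15.A}) (by simp [rules15]) (An n)
  have e : ({V15.Z, V15.A} : Multiset V15) + An n = Zn (n + 1) := by
    show (V15.Z ::ₘ V15.A ::ₘ 0) + An n = V15.Z ::ₘ An (n + 1)
    simp [An_succ, Multiset.cons_add]
  rw [e] at this
  exact this

lemma stepAτ (n : ℕ) : B15.Step A15.tau (An (n + 1)) (An n) := by
  have := mkStep (v := V15.A) (act := A15.tau) (γ := 0) (by simp [rules15]) (An n)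
  exact this

lemma stepAa (n : ℕ) : B15.Step A15.a (An (n + 1)) (An n) := by
  have := mkStep (v := V15.A) (act := A15.a) (γ := 0) (by simp [rules15]) (An n)
  exact this

lemma stepZAa (n : ℕ) : B15.Step A15.a (Zn (n + 1)) (Zn n) := by
  have := mkStep (v := V15.A) (act := A15.a) (γ := 0) (by simp [rules15]) (V15.Z ::ₘ An n)
  have e : Zn (n + 1) = V15.A ::ₘ V15.Z ::ₘ An n := by
    rw [Zn, An_succ, Multiset.cons_swap]
  rw [e]
  exact this

lemma tau15 : B15.tau = A15.tau := rfl

/-- Weak helpers. -/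
lemma wtau_refl (α : B15.Proc) : B15.WTau α α := Relation.ReflTransGen.refl

lemma wtau_single {α β : B15.Proc} (h : B15.Step A15.tau α β) : B15.WTau α β :=
  Relation.ReflTransGen.single h

lemma wtau_trans {α β γ : B15.Proc} (h1 : B15.WTau α β) (h2 : B15.WTau β γ) : B15.WTau α γ :=
  Relation.ReflTransGen.trans h1 h2

lemma wstep_tau {α β : B15.Proc} (h : B15.WTau α β) : B15.WStep A15.tau α β :=
  Or.inl ⟨rfl, h⟩

lemma wstep_vis {act : A15} (hne : act ≠ A15.tau) {α γ δ β : B15.Proc}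
    (h1 : B15.WTau α γ) (h2 : B15.Step act γ δ) (h3 : B15.WTau δ β) :
    B15.WStep act α β :=
  Or.inr ⟨hne, γ, δ, h1, h2, h3⟩

lemma wstep_of_step {act : A15} {α β : B15.Proc} (h : B15.Step act α β) :
    B15.WStep act α β := by
  by_cases hτ : act = A15.tau
  · subst hτ; exact wstep_tau (wtau_single h)
  · exact wstep_vis hτ (wtau_refl α) h (wtau_refl β)

lemma wtau_tau_inv {α β : B15.Proc} (h : B15.WStep A15.tau α β) : B15.WTau α β := by
  rcases h with ⟨_, h⟩ | ⟨hne, _⟩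
  · exact h
  · exact absurd tau15.symm hne

lemma wtau_An_le {m n : ℕ} (h : m ≤ n) : B15.WTau (An n) (An m) := by
  obtain ⟨k, rfl⟩ := Nat.exists_eq_add_of_le h
  clear h
  induction k with
  | zero => exact wtau_refl _
  | succ k ih =>
      refine Relation.ReflTransGen.head ?_ ih
      have : m + (k + 1) = (m + k) + 1 := by omega
      rw [this]
      exact stepAτ (m + k)

lemma wtau_Y_Yn (n : ℕ) : B15.WTau ({V15.Y} : Multiset V15) (Yn n) := by
  induction n with
  | zero => exact wtau_refl _
  | succ n ih => exact Relation.ReflTransGen.tail ih (stepYτ n)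

lemma wtau_Zn_up {n m : ℕ} (h : n ≤ m) : B15.WTau (Zn n) (Zn m) := by
  obtain ⟨k, rfl⟩ := Nat.exists_eq_add_of_le h
  clear h
  induction k with
  | zero => exact wtau_refl _
  | succ k ih =>
      refine Relation.ReflTransGen.tail ih ?_
      have : n + (k + 1) = (n + k) + 1 := by omega
      rw [this]
      exact stepZA (n + k)

/-- Inversion of strong steps. -/
lemma memT_inv {W : V15} {act : A15} {γ : Multiset V15} (hm : (W, act, γ) ∈ B15.T) :
    (W, act, γ) ∈ rules15 := hm

lemma inv_An {act : A15} {n : ℕ} {β : Multiset V15} (h : B15.Step act (An n) β) :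
    (act = A15.tau ∨ act = A15.a) ∧ ∃ m, n = m + 1 ∧ β = An m := by
  obtain ⟨W, γ, δ, hm, hα, hβ⟩ := h
  obtain ⟨rfl, m, rfl, rfl⟩ := consEq_An hα
  have hm' : ((V15.A, act, γ) : V15 × A15 × Multiset V15) ∈ rules15 := hm
  simp only [rules15, List.mem_cons, List.not_mem_nil, or_false, Prod.mk.injEq] at hm'
  simp only [reduceCtorEq, false_and, false_or, true_and] at hm'
  rcases hm' with ⟨rfl, rfl⟩ | ⟨rfl, rfl⟩
  · exact ⟨Or.inl rfl, m, rfl, by subst hβ; rfl⟩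
  · exact ⟨Or.inr rfl, m, rfl, by subst hβ; rfl⟩

lemma inv_X {act : A15} {β : Multiset V15} (h : B15.Step act ({V15.X} : Multiset V15) β) :
    (act = A15.tau ∧ β = ({V15.Y} : Multiset V15)) ∨
    (act = A15.b ∧ β = ({V15.Z} : Multiset V15)) := by
  obtain ⟨W, γ, δ, hm, hα, hβ⟩ := h
  obtain ⟨rfl, rfl⟩ := consEq_singleton hα
  have hm' : ((V15.X, act, γ) : V15 × A15 × Multiset V15) ∈ rules15 := hm
  simp only [rules15, List.mem_cons, List.not_mem_nil, or_false, Prod.mk.injEq] at hm'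
  simp only [reduceCtorEq, false_and, or_false, true_and] at hm'
  rcases hm' with ⟨rfl, rfl⟩ | ⟨rfl, rfl⟩
  · exact Or.inl ⟨rfl, by subst hβ; rfl⟩
  · exact Or.inr ⟨rfl, by subst hβ; rfl⟩

lemma inv_Yn {act : A15} {n : ℕ} {β : Multiset V15} (h : B15.Step act (Yn n) β) :
    (act = A15.b ∧ β = An n) ∨ (act = A15.tau ∧ β = Yn (n + 1)) ∨
    (∃ m, n = m + 1 ∧ (act = A15.tau ∨ act = A15.a) ∧ β = Yn m) := by
  obtain ⟨W, γ, δ, hm, hα, hβ⟩ := h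
  rcases consEq_cons hα with ⟨rfl, rfl⟩ | ⟨rfl, m, rfl, rfl⟩
  · have hm' : ((V15.Y, act, γ) : V15 × A15 × Multiset V15) ∈ rules15 := hm
    simp only [rules15, List.mem_cons, List.not_mem_nil, or_false, Prod.mk.injEq] at hm'
    simp only [reduceCtorEq, false_and, false_or, or_false, true_and] at hm'
    rcases hm' with ⟨rfl, rfl⟩ | ⟨rfl, rfl⟩
    · exact Or.inl ⟨rfl, by subst hβ; rfl⟩
    · refine Or.inr (Or.inl ⟨rfl, ?_⟩)
      rw [hβ]
      show (V15.Y ::ₘ V15.A ::ₘ 0) + An n = V15.Y ::ₘ An (n + 1)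
      simp [An_succ, Multiset.cons_add]
  · have hm' : ((V15.A, act, γ) : V15 × A15 × Multiset V15) ∈ rules15 := hm
    simp only [rules15, List.mem_cons, List.not_mem_nil, or_false, Prod.mk.injEq] at hm'
    simp only [reduceCtorEq, false_and, false_or, true_and] at hm'
    rcases hm' with ⟨rfl, rfl⟩ | ⟨rfl, rfl⟩
    · exact Or.inr (Or.inr ⟨m, rfl, Or.inl rfl, by subst hβ; rfl⟩)
    · exact Or.inr (Or.inr ⟨m, rfl, Or.inr rfl, by subst hβ; rfl⟩)

lemma inv_Zn {act : A15} {n : ℕ} {β : Multiset V15} (h : B15.Step act (Zn n) β) :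
    (act = A15.tau ∧ β = An n) ∨ (act = A15.tau ∧ β = Zn (n + 1)) ∨
    (∃ m, n = m + 1 ∧ (act = A15.tau ∨ act = A15.a) ∧ β = Zn m) := by
  obtain ⟨W, γ, δ, hm, hα, hβ⟩ := h
  rcases consEq_cons hα with ⟨rfl, rfl⟩ | ⟨rfl, m, rfl, rfl⟩
  · have hm' : ((V15.Z, act, γ) : V15 × A15 × Multiset V15) ∈ rules15 := hm
    simp only [rules15, List.mem_cons, List.not_mem_nil, or_false, Prod.mk.injEq] at hm'
    simp only [reduceCtorEq, false_and, false_or, or_false, true_and] at hm'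
    rcases hm' with ⟨rfl, rfl⟩ | ⟨rfl, rfl⟩
    · exact Or.inl ⟨rfl, by subst hβ; rfl⟩
    · refine Or.inr (Or.inl ⟨rfl, ?_⟩)
      rw [hβ]
      show (V15.Z ::ₘ V15.A ::ₘ 0) + An n = V15.Z ::ₘ An (n + 1)
      simp [An_succ, Multiset.cons_add]
  · have hm' : ((V15.A, act, γ) : V15 × A15 × Multiset V15) ∈ rules15 := hm
    simp only [rules15, List.mem_cons, List.not_mem_nil, or_false, Prod.mk.injEq] at hm'
    simp only [reduceCtorEq, false_and, false_or, true_and] at hm'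
    rcases hm' with ⟨rfl, rfl⟩ | ⟨rfl, rfl⟩
    · exact Or.inr (Or.inr ⟨m, rfl, Or.inl rfl, by subst hβ; rfl⟩)
    · exact Or.inr (Or.inr ⟨m, rfl, Or.inr rfl, by subst hβ; rfl⟩)

/-- Inversion of silent weak sequences. -/
lemma wtau_inv_An {n : ℕ} {β : Multiset V15} (h : B15.WTau (An n) β) :
    ∃ m, m ≤ n ∧ β = An m := by
  induction h with
  | refl => exact ⟨n, le_refl n, rfl⟩
  | tail _ hstep ih =>
      obtain ⟨m, hm, rfl⟩ := ih
      obtain ⟨_, m', hm', rfl⟩ := inv_An hstep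
      exact ⟨m', by omega, rfl⟩

lemma wtau_inv_Y {β : Multiset V15} (h : B15.WTau ({V15.Y} : Multiset V15) β) :
    ∃ n, β = Yn n := by
  have h' : B15.WTau (Yn 0) β := h
  clear h
  suffices H : ∀ {α β : Multiset V15}, B15.WTau α β → ∀ n, α = Yn n → ∃ m, β = Yn m by
    exact H h' 0 rfl
  intro α β h
  induction h with
  | refl => exact fun n hn => ⟨n, hn⟩
  | tail _ hstep ih =>
      intro n hn
      obtain ⟨m, rfl⟩ := ih n hn
      rcases inv_Yn hstep with ⟨hb, _⟩ | ⟨_, rfl⟩ | ⟨m', _, _, rfl⟩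
      · exact absurd hb (by rw [tau15] at hb ⊢; exact fun h => by cases hb)
      · exact ⟨m + 1, rfl⟩
      · exact ⟨m', rfl⟩

/-- Inversion of weak visible steps from pure-A processes and from `{Y}`. -/
lemma wstepa_inv_An {q : ℕ} {β : Multiset V15} (h : B15.WStep A15.a (An q) β) :
    ∃ j, j < q ∧ β = An j := by
  rcases h with ⟨ht, _⟩ | ⟨_, γ, δ, h1, h2, h3⟩
  · cases ht
  · obtain ⟨q1, hq1, rfl⟩ := wtau_inv_An h1
    obtain ⟨_, q2, hq2, rfl⟩ := inv_An h2
    obtain ⟨j, hj, rfl⟩ := wtau_inv_An h3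
    exact ⟨j, by omega, rfl⟩

lemma wstepb_inv_Y {β : Multiset V15} (h : B15.WStep A15.b ({V15.Y} : Multiset V15) β) :
    ∃ m, β = An m := by
  rcases h with ⟨ht, _⟩ | ⟨_, γ, δ, h1, h2, h3⟩
  · cases ht
  · obtain ⟨n, rfl⟩ := wtau_inv_Y h1
    rcases inv_Yn h2 with ⟨_, rfl⟩ | ⟨ht, _⟩ | ⟨m', _, ht, _⟩
    · obtain ⟨m, _, rfl⟩ := wtau_inv_An h3
      exact ⟨m, rfl⟩
    · cases ht
    · rcases ht with ht | ht <;> cases ht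

/-- Approximant unfolding lemmas. -/
lemma approx_zero (F : (B15.Proc → B15.Proc → Prop) → (B15.Proc → B15.Proc → Prop)) :
    B15.Approx F (0 : Ordinal.{u}) = fun _ _ => True :=
  Ordinal.limitRecOn_zero _ _ _

lemma approx_succ (F : (B15.Proc → B15.Proc → Prop) → (B15.Proc → B15.Proc → Prop))
    (o : Ordinal.{u}) : B15.Approx F (o + 1) = F (B15.Approx F o) := by
  unfold BPP.Approx
  rw [Ordinal.add_one_eq_succ, Ordinal.limitRecOn_succ]

lemma approx_limit (F : (B15.Proc → B15.Proc → Prop) → (B15.Proc → B15.Proc → Prop))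
    {o : Ordinal.{u}} (h : Order.IsSuccLimit o) :
    B15.Approx F o = fun α β => ∀ i, i < o → B15.Approx F i α β := by
  unfold BPP.Approx
  rw [Ordinal.limitRecOn_limit _ _ _ _ h]

lemma approx_refl (o : Ordinal.{u}) : ∀ α : B15.Proc, B15.Approx B15.RefSL o α α := by
  induction o using Ordinal.induction with
  | _ j ih =>
    rcases Ordinal.zero_or_succ_or_isSuccLimit j with rfl | ⟨k, rfl⟩ | hlim
    · intro α; rw [approx_zero]; trivial
    · intro α
      rw [← Ordinal.add_one_eq_succ, approx_succ]
      have hk : k < Order.succ k := Order.lt_succ k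
      constructor
      · intro a α' h; exact ⟨α', wstep_of_step h, ih k hk α'⟩
      · intro a α' h; exact ⟨α', wstep_of_step h, ih k hk α'⟩
    · intro α
      rw [approx_limit _ hlim]
      intro i hi
      exact ih i hi α

/-- The key finite-level lemma: `A^n ≈_i A^m` when `i ≤ n, m`, and `Z A^n ≈_i A^m`
when `i ≤ m`. -/
lemma key : ∀ i : ℕ,
    (∀ n m : ℕ, i ≤ n → i ≤ m → B15.Approx B15.RefSL ((i : ℕ) : Ordinal.{u}) (An n) (An m)) ∧
    (∀ n m : ℕ, i ≤ m → B15.Approx B15.RefSL ((i : ℕ) : Ordinal.{u}) (Zn n) (An m)) := by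
  intro i
  induction i with
  | zero =>
      constructor
      · intro n m _ _
        rw [Nat.cast_zero, approx_zero]; trivial
      · intro n m _
        rw [Nat.cast_zero, approx_zero]; trivial
  | succ i ih =>
      obtain ⟨ihAA, ihZA⟩ := ih
      have hcast : ((i + 1 : ℕ) : Ordinal.{u}) = ((i : ℕ) : Ordinal.{u}) + 1 := by
        push_cast; ring
      -- Responses of A^m to attacks of A^n
      have AAdir : ∀ n m : ℕ, i + 1 ≤ n → i + 1 ≤ m →
          ∀ a α', B15.Step a (An n) α' →
            ∃ β', B15.WStep a (An m) β' ∧ B15.Approx B15.RefSL ((i : ℕ) : Ordinal.{u}) α' β' := by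
        intro n m hn hm a α' h
        obtain ⟨hact, n', rfl, rfl⟩ := inv_An h
        rcases hact with rfl | rfl
        · exact ⟨An m, wstep_tau (wtau_refl _), ihAA n' m (by omega) (by omega)⟩
        · obtain ⟨m', rfl⟩ : ∃ m', m = m' + 1 := ⟨m - 1, by omega⟩
          exact ⟨An m', wstep_of_step (stepAa m'), ihAA n' m' (by omega) (by omega)⟩
      -- Responses of A^n to attacks of A^m (mirror orientation)
      have AAdir2 : ∀ n m : ℕ, i + 1 ≤ n → i + 1 ≤ m →
          ∀ a β', B15.Step a (An m) β' →
            ∃ α', B15.WStep a (An n) α' ∧ B15.Approx B15.RefSL ((i : ℕ) : Ordinal.{u}) α' β' := by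
        intro n m hn hm a β' h
        obtain ⟨hact, m', rfl, rfl⟩ := inv_An h
        rcases hact with rfl | rfl
        · exact ⟨An n, wstep_tau (wtau_refl _), ihAA n m' (by omega) (by omega)⟩
        · obtain ⟨n', rfl⟩ : ∃ n', n = n' + 1 := ⟨n - 1, by omega⟩
          exact ⟨An n', wstep_of_step (stepAa n'), ihAA n' m' (by omega) (by omega)⟩
      -- Responses of A^m to attacks of Z A^n
      have ZAdir1 : ∀ n m : ℕ, i + 1 ≤ m →
          ∀ a α', B15.Step a (Zn n) α' →
            ∃ β', B15.WStep a (An m) β' ∧ B15.Approx B15.RefSL ((i : ℕ) : Ordinal.{u}) α' β' := by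
        intro n m hm a α' h
        rcases inv_Zn h with ⟨rfl, rfl⟩ | ⟨rfl, rfl⟩ | ⟨n', rfl, hact, rfl⟩
        · by_cases hnm : n ≤ m
          · exact ⟨An n, wstep_tau (wtau_An_le hnm), approx_refl _ _⟩
          · exact ⟨An m, wstep_tau (wtau_refl _), ihAA n m (by omega) (by omega)⟩
        · exact ⟨An m, wstep_tau (wtau_refl _), ihZA (n + 1) m (by omega)⟩
        · obtain ⟨m', rfl⟩ : ∃ m', m = m' + 1 := ⟨m - 1, by omega⟩
          rcases hact with rfl | rfl
          · exact ⟨An (m' + 1), wstep_tau (wtau_refl _), ihZA n' (m' + 1) (by omega)⟩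
          · exact ⟨An m', wstep_of_step (stepAa m'), ihZA n' m' (by omega)⟩
      -- Responses of Z A^n to attacks of A^m
      have ZAdir2 : ∀ n m : ℕ, i + 1 ≤ m →
          ∀ a β', B15.Step a (An m) β' →
            ∃ α', B15.WStep a (Zn n) α' ∧ B15.Approx B15.RefSL ((i : ℕ) : Ordinal.{u}) α' β' := by
        intro n m hm a β' h
        obtain ⟨hact, m', rfl, rfl⟩ := inv_An h
        rcases hact with rfl | rfl
        · exact ⟨Zn n, wstep_tau (wtau_refl _), ihZA n m' (by omega)⟩
        · refine ⟨Zn n, wstep_vis (by intro h'; cases h') (wtau_Zn_up (Nat.le_succ n))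
            (stepZAa n) (wtau_refl _), ihZA n m' (by omega)⟩
      constructor
      · intro n m hn hm
        rw [hcast, approx_succ]
        exact ⟨AAdir n m hn hm, AAdir2 n m hn hm⟩
      · intro n m hm
        rw [hcast, approx_succ]
        exact ⟨ZAdir1 n m hm, ZAdir2 n m hm⟩

/-- `X ≈_i Y` for every finite `i`. -/
lemma XY : ∀ i : ℕ,
    B15.Approx B15.RefSL ((i : ℕ) : Ordinal.{u}) ({V15.X} : Multiset V15) ({V15.Y} : Multiset V15) := by
  intro i
  cases i with
  | zero =>
      rw [Nat.cast_zero, approx_zero]; trivial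
  | succ i =>
      have hcast : ((i + 1 : ℕ) : Ordinal.{u}) = ((i : ℕ) : Ordinal.{u}) + 1 := by
        push_cast; ring
      rw [hcast, approx_succ]
      constructor
      · intro a α' h
        rcases inv_X h with ⟨rfl, rfl⟩ | ⟨rfl, rfl⟩
        · exact ⟨{V15.Y}, wstep_tau (wtau_refl _), approx_refl _ _⟩
        · refine ⟨An i, wstep_vis (by intro h'; cases h') (wtau_Y_Yn i)
            (stepYb i) (wtau_refl _), ?_⟩
          rw [← Zn_zero]
          exact (key i).2 0 i le_rfl
      · intro a β' h
        have h' : B15.Step a (Yn 0) β' := h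
        rcases inv_Yn h' with ⟨rfl, rfl⟩ | ⟨rfl, rfl⟩ | ⟨m, hm, _, _⟩
        · refine ⟨An 0, wstep_vis (by intro h''; cases h'')
            (wtau_single stepXY) (stepYb 0) (wtau_refl _), approx_refl _ _⟩
        · refine ⟨Yn 1, wstep_tau ?_, approx_refl _ _⟩
          exact Relation.ReflTransGen.tail (wtau_single stepXY) (stepYτ 0)
        · omega

/-- Positive half: `X ≈_ω Y`. -/
lemma XY_omega :
    B15.Approx B15.RefSL Ordinal.omega0.{u} ({V15.X} : Multiset V15) ({V15.Y} : Multiset V15) := by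
  rw [approx_limit _ Ordinal.isSuccLimit_omega0]
  intro i hi
  obtain ⟨n, rfl⟩ := Ordinal.lt_omega0.mp hi
  exact XY n

/-- In a weak bisimulation, silent weak sequences are matched. -/
lemma sat_tau {R : B15.Proc → B15.Proc → Prop} (hR : B15.IsWeakBisim R)
    {α β α' : B15.Proc} (hab : R α β) (h : B15.WTau α α') :
    ∃ β', B15.WTau β β' ∧ R α' β' := by
  induction h with
  | refl => exact ⟨β, wtau_refl _, hab⟩
  | tail _ hstep ih =>
      obtain ⟨β1, hβ1, hR1⟩ := ih
      obtain ⟨β2, hw, hR2⟩ := hR.2 _ _ hR1 _ _ hstep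
      exact ⟨β2, wtau_trans hβ1 (wtau_tau_inv hw), hR2⟩

/-- No weak bisimulation can relate `A^p` and `A^j` with `j < p`. -/
lemma noA {R : B15.Proc → B15.Proc → Prop} (hR : B15.IsWeakBisim R) :
    ∀ k : ℕ, ∀ p j : ℕ, j ≤ k → j < p → ¬ R (An p) (An j) := by
  intro k
  induction k with
  | zero =>
      intro p j hjk hjp hRpj
      obtain ⟨p', rfl⟩ : ∃ p', p = p' + 1 := ⟨p - 1, by omega⟩
      obtain ⟨β', hw, _⟩ := hR.2 _ _ hRpj _ _ (stepAa p')
      interval_cases j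
      obtain ⟨j', hj', _⟩ := wstepa_inv_An hw
      omega
  | succ k ihk =>
      intro p j hjk hjp hRpj
      obtain ⟨p', rfl⟩ : ∃ p', p = p' + 1 := ⟨p - 1, by omega⟩
      obtain ⟨β', hw, hR'⟩ := hR.2 _ _ hRpj _ _ (stepAa p')
      obtain ⟨j', hj', rfl⟩ := wstepa_inv_An hw
      exact ihk p' j' (by omega) (by omega) hR'

/-- Negative half: `X ≉ Y`. -/
lemma not_WBisim :
    ¬ B15.WBisim ({V15.X} : Multiset V15) ({V15.Y} : Multiset V15) := by
  rintro ⟨R, hR, hXY⟩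
  obtain ⟨β', hw, hRZ⟩ := hR.2 _ _ hXY _ _ stepXZ
  obtain ⟨m, rfl⟩ := wstepb_inv_Y hw
  rw [← Zn_zero] at hRZ
  have hz : B15.WTau (Zn 0) (An (m + 1)) :=
    Relation.ReflTransGen.tail (wtau_Zn_up (Nat.zero_le (m + 1))) (stepZ0 (m + 1))
  obtain ⟨β'', hβ'', hR'⟩ := sat_tau hR hRZ hz
  obtain ⟨k, hk, rfl⟩ := wtau_inv_An hβ''
  exact noA hR m (m + 1) k hk (by omega) hR'

end SL15


/-- `X ≈_ω Y` but `X ≉ Y`; hence `≈ ≠ ≈_ω` for this description. -/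
theorem sl_approximants_not_stable_at_omega :
    B15.Approx B15.RefSL Ordinal.omega0 ({V15.X} : Multiset V15) ({V15.Y} : Multiset V15) ∧
    ¬ B15.WBisim ({V15.X} : Multiset V15) ({V15.Y} : Multiset V15) ∧
    ¬ (∀ α β : B15.Proc, B15.WBisim α β ↔ B15.Approx B15.RefSL Ordinal.omega0 α β) := by
  refine ⟨SL15.XY_omega, SL15.not_WBisim, fun H => SL15.not_WBisim ?_⟩
  exact (H _ _).mpr SL15.XY_omega
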